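/- arXiv:2103.16602 — 2 statements merged into one kernel-verified Lean document; each statement's English description precedes it below -/
import Mathlib

section
/- Let G be a finitely generated, conjugacy separable group, and let α₁, …, α_k be automorphisms of G such that for each i there exists g_i ∈ G with α_i(g_i) not conjugate to g_i in G. Then there exists a characteristic finite-index subgroup K of G such that for each i the automorphism of G/K induced by α_i is not inner; explicitly, for each i there is no g₀ ∈ G with α_i(x)·(g₀·x·g₀⁻¹)⁻¹ ∈ K for all x ∈ G. -/
/-- A finitely generated group has finitely many homomorphisms to a finite group. -/
lemma finite_monoidHom_of_fg {G Q : Type*} [Group G] [Group Q] (hFG : Group.FG G)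
    [Finite Q] : Finite (G →* Q) := by
  obtain ⟨S, hS⟩ := hFG
  have hinj : Function.Injective (fun (φ : G →* Q) => fun s : S => φ s) := by
    intro φ ψ h
    refine MonoidHom.eq_of_eqOn_dense hS ?_
    intro x hx
    exact congrFun h ⟨x, hx⟩
  exact Finite.of_injective _ hinj

/-- If `G` is finitely generated and conjugacy separable, and
`α₁, …, α_k` are automorphisms each moving some element off its conjugacy class, then
there is a characteristic finite-index subgroup `K` of `G` such that no `α_i` induces
an inner automorphism of `G/K`. -/
theorem exists_characteristic_finiteIndex_not_inner_mod
    {G : Type*} [Group G] (hFG : Group.FG G)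
    (hsep : ∀ a b : G, ¬ IsConj a b →
      ∃ (Q : Type) (_ : Group Q) (_ : Finite Q) (f : G →* Q), ¬ IsConj (f a) (f b))
    (k : ℕ) (αs : Fin k → MulAut G)
    (hmove : ∀ i : Fin k, ∃ g : G, ¬ IsConj (αs i g) g) :
    ∃ K : Subgroup G, K.Characteristic ∧ K.FiniteIndex ∧
      ∀ i : Fin k, ¬ ∃ g₀ : G, ∀ x : G, αs i x * (g₀ * x * g₀⁻¹)⁻¹ ∈ K := by
  classical
  -- choose witnesses
  choose g hg using hmove
  have hsep' : ∀ i : Fin k, ∃ (Q : Type) (_ : Group Q) (_ : Finite Q) (f : G →* Q),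
      ¬ IsConj (f (αs i (g i))) (f (g i)) := fun i => hsep _ _ (hg i)
  choose Q instQ instFinQ f hf using hsep'
  -- the big finite target
  let P : Type := ∀ i : Fin k, Q i
  letI : ∀ i, Group (Q i) := instQ
  haveI : ∀ i, Finite (Q i) := instFinQ
  letI : Group P := Pi.group
  haveI : Finite P := Pi.finite
  haveI : Finite (G →* P) := finite_monoidHom_of_fg hFG
  -- K = intersection of kernels of all homs G →* P
  let K : Subgroup G := ⨅ φ : G →* P, φ.ker
  have hKmem : ∀ {x : G}, x ∈ K ↔ ∀ φ : G →* P, φ x = 1 := by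
    intro x
    simp [K, Subgroup.mem_iInf, MonoidHom.mem_ker]
  refine ⟨K, ?_, ?_, ?_⟩
  · -- characteristic
    rw [Subgroup.characteristic_iff_comap_eq]
    intro α
    have h : ∀ (β : G ≃* G) (x : G), x ∈ K → β x ∈ K := by
      intro β x hx
      rw [hKmem] at hx ⊢
      intro φ
      exact hx (φ.comp β.toMonoidHom)
    ext x
    simp only [Subgroup.mem_comap, MulEquiv.coe_toMonoidHom]
    constructor
    · intro hx
      have := h α.symm (α x) hx
      simpa using this
    · intro hx
      exact h α x hx
  · -- finite index
    let Φ : G →* (∀ φ : G →* P, P) := Pi.monoidHom (fun φ => φ)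
    haveI : Finite (∀ φ : G →* P, P) := Pi.finite
    have hK : K = Φ.ker := by
      ext x
      rw [hKmem, MonoidHom.mem_ker]
      constructor
      · intro h; funext φ; exact h φ
      · intro h φ; exact congrFun h φ
    rw [hK]
    exact Subgroup.finiteIndex_ker Φ
  · -- no induced inner automorphism
    rintro i ⟨g₀, hg₀⟩
    apply hf i
    have hx := hg₀ (g i)
    rw [hKmem] at hx
    -- use the hom G →* P combining the f i, then project
    let F : G →* P := Pi.monoidHom (fun j => f j)
    have hF := hx F
    rw [map_mul, map_inv, mul_inv_eq_one] at hF
    have h3 : f i (αs i (g i)) = f i (g₀ * g i * g₀⁻¹) := congrFun hF i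
    rw [h3]
    have hc : IsConj (f i (g i)) (f i (g₀ * g i * g₀⁻¹)) := by
      rw [isConj_iff]
      exact ⟨f i g₀, by simp [map_mul, map_inv]⟩
    exact hc.symm
end

section
/- Let H be a group with trivial center and let G = H × ℤ. Then for every automorphism α of G there exist an automorphism σ of H, a group homomorphism n : H → ℤ, and a sign ε ∈ {1, −1} such that α(h, m) = (σ(h), n(h) + ε·m) for all h ∈ H and m ∈ ℤ. -/
/-!
An automorphism `α` of `H × A`, with `A` abelian, preserves the center, which is `1 × A` when `H`
is centerless. Hence `α (1, a) = (1, τ a)` and `α (h, a) = α (h, 1) * α (1, a)` splits as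
`(σ h, n h * τ a)`; comparing with `α⁻¹` shows that `σ` and `τ` are automorphisms. For `A = ℤ`,
the only automorphisms are `± id`.
-/

namespace MulAut

section Components

variable {M N : Type*} [MulOneClass M] [MulOneClass N]

def leftHom (α : MulAut (M × N)) : M →* M :=
  (MonoidHom.fst M N).comp (α.toMonoidHom.comp (MonoidHom.inl M N))

def crossHom (α : MulAut (M × N)) : M →* N :=
  (MonoidHom.snd M N).comp (α.toMonoidHom.comp (MonoidHom.inl M N))

def rightHom (α : MulAut (M × N)) : N →* N :=
  (MonoidHom.snd M N).comp (α.toMonoidHom.comp (MonoidHom.inr M N))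

@[simp]
theorem leftHom_apply (α : MulAut (M × N)) (m : M) : leftHom α m = (α (m, 1)).1 := rfl

@[simp]
theorem crossHom_apply (α : MulAut (M × N)) (m : M) : crossHom α m = (α (m, 1)).2 := rfl

@[simp]
theorem rightHom_apply (α : MulAut (M × N)) (n : N) : rightHom α n = (α (1, n)).2 := rfl

end Components

variable {H A : Type*} [Group H] [CommGroup A]

theorem fst_apply_one_mk (hZ : Subgroup.center H = ⊥) (α : MulAut (H × A)) (a : A) :
    (α (1, a)).1 = 1 := by
  have hcentral : ((1 : H), a) ∈ Subgroup.center (H × A) := by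
    rw [Subgroup.center_prod, CommGroup.center_eq_top]
    exact ⟨one_mem _, Subgroup.mem_top a⟩
  have himage : α (1, a) ∈ Subgroup.center (H × A) := MulEquivClass.apply_mem_center α hcentral
  rw [Subgroup.center_prod, hZ] at himage
  exact himage.1

theorem apply_one_mk (hZ : Subgroup.center H = ⊥) (α : MulAut (H × A)) (a : A) :
    α (1, a) = (1, rightHom α a) :=
  Prod.ext (fst_apply_one_mk hZ α a) rfl

theorem apply_mk (hZ : Subgroup.center H = ⊥) (α : MulAut (H × A)) (h : H) (a : A) :
    α (h, a) = (leftHom α h, crossHom α h * rightHom α a) := by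
  rw [show (h, a) = (h, 1) * (1, a) by simp, map_mul, apply_one_mk hZ]
  ext <;> simp

theorem leftHom_symm_apply_leftHom (hZ : Subgroup.center H = ⊥) (α : MulAut (H × A)) (h : H) :
    leftHom α.symm (leftHom α h) = h := by
  have := congrArg Prod.fst (α.symm_apply_apply (h, 1))
  rwa [← Prod.mk.eta (p := α (h, 1)), apply_mk hZ α.symm] at this

theorem rightHom_symm_apply_rightHom (hZ : Subgroup.center H = ⊥) (α : MulAut (H × A)) (a : A) :
    rightHom α.symm (rightHom α a) = a := by
  have := congrArg Prod.snd (α.symm_apply_apply (1, a))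
  rwa [apply_one_mk hZ α, apply_one_mk hZ α.symm] at this

def leftAut (hZ : Subgroup.center H = ⊥) (α : MulAut (H × A)) : MulAut H :=
  (leftHom α).toMulEquiv (leftHom α.symm)
    (MonoidHom.ext (leftHom_symm_apply_leftHom hZ α))
    (MonoidHom.ext (by simpa using leftHom_symm_apply_leftHom hZ α.symm))

def rightAut (hZ : Subgroup.center H = ⊥) (α : MulAut (H × A)) : MulAut A :=
  (rightHom α).toMulEquiv (rightHom α.symm)
    (MonoidHom.ext (rightHom_symm_apply_rightHom hZ α))
    (MonoidHom.ext (by simpa using rightHom_symm_apply_rightHom hZ α.symm))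

theorem apply_mk_eq_leftAut_rightAut (hZ : Subgroup.center H = ⊥) (α : MulAut (H × A))
    (h : H) (a : A) : α (h, a) = (leftAut hZ α h, crossHom α h * rightAut hZ α a) :=
  apply_mk hZ α h a

end MulAut

theorem Multiplicative.mulAut_int_apply_ofAdd (e : MulAut (Multiplicative ℤ)) :
    ∃ ε : ℤ, (ε = 1 ∨ ε = -1) ∧ ∀ m : ℤ, e (.ofAdd m) = .ofAdd (ε * m) := by
  rcases Int.addEquiv_eq_refl_or_neg (AddEquiv.toMultiplicative.symm e) with he | he
  · exact ⟨1, .inl rfl, fun m => by simpa using congrArg ofAdd (DFunLike.congr_fun he m)⟩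
  · exact ⟨-1, .inr rfl, fun m => by simpa using congrArg ofAdd (DFunLike.congr_fun he m)⟩

/-- If `H` is centerless and `G = H × ℤ`, then every automorphism
`α` of `G` has the form `α (h, m) = (σ h, n h + ε • m)` for an automorphism `σ` of
`H`, a homomorphism `n : H → ℤ`, and a sign `ε ∈ {1, -1}`. -/
theorem mulAut_prod_int_decomposition
    {H : Type*} [Group H] (hZ : Subgroup.center H = ⊥)
    (α : MulAut (H × Multiplicative ℤ)) :
    ∃ (σ : MulAut H) (n : H →* Multiplicative ℤ) (ε : ℤ),
      (ε = 1 ∨ ε = -1) ∧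
      ∀ (h : H) (m : ℤ),
        α (h, Multiplicative.ofAdd m)
          = (σ h, n h * Multiplicative.ofAdd (ε * m)) := by
  obtain ⟨ε, hε, hτ⟩ := Multiplicative.mulAut_int_apply_ofAdd (MulAut.rightAut hZ α)
  refine ⟨MulAut.leftAut hZ α, MulAut.crossHom α, ε, hε, fun h m => ?_⟩
  rw [MulAut.apply_mk_eq_leftAut_rightAut hZ, hτ]
end
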